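/- Let {s_1,...,s_K} be an (M,K,L)-schedule sequence set with respect to a partition of the K nodes into W nonempty groups whose smallest group size is k = 1. Then L ≥ 4(W−1). -/

import Mathlib

/-- A schedule symbol for a system with `W` channels: `T m` means "transmit on
channel `m`" and `R r` means "receive on channel `r`". -/
inductive SchedSym (W : ℕ) where
  | T : Fin W → SchedSym W
  | R : Fin W → SchedSym W
deriving DecidableEq

/-- `IsScheduleSet W K L G s` says that `s` is an `(M,K,L)`-schedule sequence set
(for any number of channels `M ≥ W`) with respect to the partition of the `K` nodes
into the `W` groups given by the group-assignment map `G` (node `i` lies in group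
`G i`). Sequences are modeled as `ℕ → SchedSym W`, indexed modulo `L`.

* `own_channel`: a node in group `m` only uses the transmit symbol `T m`;
* `intra`: intra-group requirement (eq. (1) of the paper) for all offsets `τ ∈ Z_L^K`;
* `inter`: inter-group requirement (eq. (2) of the paper) for all offsets `τ ∈ Z_L^K`. -/
structure IsScheduleSet (W K L : ℕ) (G : Fin K → Fin W)
    (s : Fin K → ℕ → SchedSym W) : Prop where
  own_channel : ∀ (i : Fin K) (t : ℕ) (m : Fin W), s i t = SchedSym.T m → m = G i
  intra : ∀ τ : Fin K → ℕ, (∀ i, τ i < L) → ∀ i j : Fin K, i ≠ j → G i = G j →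
    ∃ t < L, s i ((t + τ i) % L) = SchedSym.T (G i) ∧
      s j ((t + τ j) % L) = SchedSym.R (G i) ∧
      ∀ x : Fin K, x ≠ i → x ≠ j → G x = G i → s x ((t + τ x) % L) ≠ SchedSym.T (G i)
  inter : ∀ τ : Fin K → ℕ, (∀ i, τ i < L) → ∀ i j : Fin K, G i ≠ G j →
    ∃ t < L, s i ((t + τ i) % L) = SchedSym.T (G i) ∧
      s j ((t + τ j) % L) = SchedSym.R (G i) ∧
      ∀ x : Fin K, x ≠ i → G x = G i → s x ((t + τ x) % L) ≠ SchedSym.T (G i)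

/-- The size of group `m` under the group-assignment map `G`. -/
def groupSize {W K : ℕ} (G : Fin K → Fin W) (m : Fin W) : ℕ :=
  (Finset.univ.filter (fun i => G i = m)).card

/-
Fix one representative node per group. If the representative of group `n` transmits in `a n`
slots of a period and the representative of group `m` receives on channel `n` in `b m n` slots,
then the inter-group requirement, applied to every relative shift of the two sequences, gives
`L ≤ a n * b m n`, while disjointness of the slots of one sequence gives
`a m + ∑_{n ≠ m} b m n ≤ L`. If `L < 4 (W - 1)`, then `a (L - a) ≤ L² / 4 < (W - 1) L` turns the
first inequality into `L - a n < (W - 1) b m n`; summing over `n ≠ m` and then over `m`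
contradicts the second.
-/

open Finset

section Counting

variable {L : ℕ}

theorem le_card_mul_card_of_forall_shift (A B : Finset ℕ)
    (h : ∀ σ < L, ∃ t ∈ A, (t + σ) % L ∈ B) : L ≤ #A * #B := by
  choose! t htA htB using h
  have hmaps : ∀ σ ∈ range L, (t σ, (t σ + σ) % L) ∈ A ×ˢ B := fun σ hσ =>
    mem_product.mpr ⟨htA σ (mem_range.mp hσ), htB σ (mem_range.mp hσ)⟩
  have hinj : Set.InjOn (fun σ => (t σ, (t σ + σ) % L)) (range L) := by
    intro σ₁ hσ₁ σ₂ hσ₂ h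
    simp only [coe_range, Set.mem_Iio, Prod.mk.injEq] at hσ₁ hσ₂ h
    obtain ⟨ht, hshift⟩ := h
    rw [ht] at hshift
    have := Nat.ModEq.add_left_cancel' (t σ₂) hshift
    rwa [Nat.ModEq, Nat.mod_eq_of_lt hσ₁, Nat.mod_eq_of_lt hσ₂] at this
  simpa [card_product] using card_le_card_of_injOn _ hmaps hinj

theorem sub_lt_mul_of_le_mul {x a b : ℕ} (hL : 0 < L) (hLx : L < 4 * x) (ha : a ≤ L)
    (hab : L ≤ a * b) : L - a < x * b := by
  obtain ⟨c, rfl⟩ := Nat.exists_eq_add_of_le ha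
  rw [Nat.add_sub_cancel_left]
  by_contra! hc
  nlinarith [sq_nonneg ((a : ℤ) - c), Nat.mul_le_mul_left a hc]

theorem four_mul_card_sub_one_le {ι : Type*} [Fintype ι] [DecidableEq ι] (hL : 0 < L)
    (a : ι → ℕ) (b : ι → ι → ℕ) (hbudget : ∀ m, a m + ∑ n ∈ univ.erase m, b m n ≤ L)
    (hcover : ∀ m n, m ≠ n → L ≤ a n * b m n) : 4 * (Fintype.card ι - 1) ≤ L := by
  set x := Fintype.card ι - 1 with hx
  by_contra! hLx
  have ha : ∀ m, a m ≤ L := fun m => (Nat.le_add_right _ _).trans (hbudget m)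
  set S := ∑ m, (L - a m)
  have hrow : ∀ m, S + x ≤ Fintype.card ι * (L - a m) := by
    intro m
    have hsum : ∑ n ∈ univ.erase m, (L - a n + 1) ≤ x * (L - a m) :=
      calc ∑ n ∈ univ.erase m, (L - a n + 1)
          ≤ ∑ n ∈ univ.erase m, x * b m n := sum_le_sum fun n hn =>
            sub_lt_mul_of_le_mul hL hLx (ha n) (hcover m n (ne_of_mem_erase hn).symm)
        _ = x * ∑ n ∈ univ.erase m, b m n := (mul_sum ..).symm
        _ ≤ x * (L - a m) := Nat.mul_le_mul_left x (by have := hbudget m; omega)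
    rw [sum_add_distrib, sum_const, card_erase_of_mem (mem_univ m), card_univ, ← hx,
      smul_eq_mul, mul_one] at hsum
    have hsplit : ∑ n ∈ univ.erase m, (L - a n) + (L - a m) = S :=
      sum_erase_add univ (fun n => L - a n) (mem_univ m)
    rw [show Fintype.card ι = x + 1 by omega, add_one_mul]
    linarith
  have htotal : Fintype.card ι * (S + x) ≤ Fintype.card ι * S :=
    calc Fintype.card ι * (S + x) = ∑ _m : ι, (S + x) := by simp
      _ ≤ ∑ m, Fintype.card ι * (L - a m) := sum_le_sum fun m _ => hrow m
      _ = Fintype.card ι * S := (mul_sum ..).symm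
  have := Nat.le_of_mul_le_mul_left htotal (by omega)
  omega

end Counting

variable {α : Type*} [DecidableEq α]

def slots (L : ℕ) (f : ℕ → α) (a : α) : Finset ℕ := {t ∈ range L | f t = a}

theorem sum_card_slots_le (L : ℕ) (f : ℕ → α) (A : Finset α) :
    ∑ a ∈ A, #(slots L f a) ≤ L := by
  unfold slots
  rw [sum_card_fiberwise_eq_card_filter]
  exact (card_filter_le _ _).trans (card_range L).le

theorem card_transmit_add_sum_card_receive_le {W : ℕ} (L : ℕ) (f : ℕ → SchedSym W)
    (m : Fin W) :
    #(slots L f (.T m)) + ∑ n ∈ univ.erase m, #(slots L f (.R n)) ≤ L := by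
  have hR : Function.Injective (SchedSym.R : Fin W → SchedSym W) := fun _ _ h => SchedSym.R.inj h
  have hT : SchedSym.T m ∉ (univ.erase m).map ⟨_, hR⟩ := by simp
  have := sum_card_slots_le L f (insert (.T m) ((univ.erase m).map ⟨_, hR⟩))
  rwa [sum_insert hT, sum_map] at this

theorem IsScheduleSet.le_card_transmit_mul_card_receive {W K L : ℕ} {G : Fin K → Fin W}
    {s : Fin K → ℕ → SchedSym W} (hs : IsScheduleSet W K L G s) (hL : 0 < L) {i j : Fin K}
    (hij : G i ≠ G j) :
    L ≤ #(slots L (s i) (.T (G i))) * #(slots L (s j) (.R (G i))) := by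
  have hne : j ≠ i := fun h => hij (h ▸ rfl)
  refine le_card_mul_card_of_forall_shift _ _ fun σ hσ => ?_
  obtain ⟨t, ht, hi, hj, -⟩ := hs.inter (Function.update 0 j σ)
    (fun y => by by_cases hy : y = j <;> simp [hy, hσ, hL]) i j hij
  rw [Function.update_of_ne hne.symm, Pi.zero_apply, add_zero, Nat.mod_eq_of_lt ht] at hi
  rw [Function.update_self] at hj
  exact ⟨t, mem_filter.mpr ⟨mem_range.mpr ht, hi⟩,
    mem_filter.mpr ⟨mem_range.mpr (Nat.mod_lt _ hL), hj⟩⟩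

theorem schedule_set_period_lower_bound_k_one_general
    (K L W : ℕ) (hL : 0 < L)
    (G : Fin K → Fin W) (hG : Function.Surjective G)
    (s : Fin K → ℕ → SchedSym W) (hs : IsScheduleSet W K L G s) :
    4 * (W - 1) ≤ L := by
  choose rep hrep using hG
  simpa using four_mul_card_sub_one_le hL
    (fun m => #(slots L (s (rep m)) (.T m))) (fun m n => #(slots L (s (rep m)) (.R n)))
    (fun m => card_transmit_add_sum_card_receive_le L _ m)
    (fun m n hmn => by
      simpa [hrep] using hs.le_card_transmit_mul_card_receive hL (i := rep n) (j := rep m)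
        (by simpa [hrep] using hmn.symm))

/-- if `{s_1,...,s_K}` is an `(M,K,L)`-schedule sequence set with
respect to a partition into `W` nonempty groups with smallest group size `k = 1`, then
`L ≥ 4(W−1)`. -/
theorem schedule_set_period_lower_bound_k_one
    (M K L W : ℕ) (hL : 0 < L) (hW : 1 ≤ W) (hWM : W ≤ M) (hMK : M ≤ K)
    (G : Fin K → Fin W) (hG : Function.Surjective G)
    (hkex : ∃ m : Fin W, groupSize G m = 1)
    (s : Fin K → ℕ → SchedSym W) (hs : IsScheduleSet W K L G s) :
    4 * (W - 1) ≤ L :=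
  schedule_set_period_lower_bound_k_one_general K L W hL G hG s hs
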